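/- arXiv:2502.06384 — 3 statements merged into one kernel-verified Lean document; each statement's English description precedes it below -/
import Mathlib

section
/- Fix an index i. For 0 ≤ j ≤ k+1, (ad_L)^j applied to ∂^{k+ℓ}/∂pᵢᵏ∂qᵢˡ equals (-1)^j · k!/(k-j)! · ∂^{k+ℓ}/∂pᵢ^{k-j}∂qᵢ^{ℓ+j} for j ≤ k, and equals 0 for j = k+1. -/
/-- Phase space with `d` degrees of freedom: points `(q, p)`. -/
abbrev Phase (d : ℕ) := (Fin d → ℝ) × (Fin d → ℝ)

/-- Partial derivative with respect to `q i`. -/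
noncomputable def pdq {d : ℕ} (i : Fin d) (f : Phase d → ℝ) : Phase d → ℝ :=
  fun x => fderiv ℝ f x (Pi.single i 1, 0)

/-- Partial derivative with respect to `p i`. -/
noncomputable def pdp {d : ℕ} (i : Fin d) (f : Phase d → ℝ) : Phase d → ℝ :=
  fun x => fderiv ℝ f x (0, Pi.single i 1)

/-- The operator `L = ∑ i, pᵢ ∂/∂qᵢ`. -/
noncomputable def Lop {d : ℕ} (f : Phase d → ℝ) : Phase d → ℝ :=
  fun x => ∑ i, x.2 i * pdq i f x

/-- The adjoint action `ad_L(T) = L ∘ T - T ∘ L` on operators. -/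
noncomputable def adL {d : ℕ} (T : (Phase d → ℝ) → (Phase d → ℝ)) :
    (Phase d → ℝ) → (Phase d → ℝ) :=
  fun f => Lop (T f) - T (Lop f)

noncomputable def dD {d : ℕ} (v : Phase d) (f : Phase d → ℝ) : Phase d → ℝ :=
  fun x => fderiv ℝ f x v

variable {d : ℕ}

lemma pdq_eq (i : Fin d) : (pdq i : (Phase d → ℝ) → _) = dD ((Pi.single i 1, 0)) := rfl
lemma pdp_eq (i : Fin d) : (pdp i : (Phase d → ℝ) → _) = dD ((0, Pi.single i 1)) := rfl

lemma dD_contDiff {f : Phase d → ℝ} (hf : ContDiff ℝ (⊤ : ℕ∞) f) (v : Phase d) :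
    ContDiff ℝ (⊤ : ℕ∞) (dD v f) := (hf.fderiv_right (by simp)).clm_apply contDiff_const

lemma dD_iter_contDiff {f : Phase d → ℝ} (hf : ContDiff ℝ (⊤ : ℕ∞) f) (v : Phase d) (n : ℕ) :
    ContDiff ℝ (⊤ : ℕ∞) ((dD v)^[n] f) := by
  induction n generalizing f with
  | zero => exact hf
  | succ n ih => rw [Function.iterate_succ_apply]; exact ih (dD_contDiff hf v)

lemma dD_comm {f : Phase d → ℝ} (hf : ContDiff ℝ (⊤ : ℕ∞) f) (v w : Phase d) :
    dD v (dD w f) = dD w (dD v f) := by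
  funext x
  have h2 : DifferentiableAt ℝ (fderiv ℝ f) x :=
    ((hf.fderiv_right (m := (⊤ : ℕ∞)) (by simp)).differentiable (by simp)) x
  have key : ∀ u : Phase d, fderiv ℝ (dD u f) x
      = (ContinuousLinearMap.apply ℝ ℝ u).comp (fderiv ℝ (fderiv ℝ f) x) :=
    fun u => ((ContinuousLinearMap.apply ℝ ℝ u).hasFDerivAt.comp x h2.hasFDerivAt).fderiv
  have hsymm := second_derivative_symmetric
    (fun y => (hf.differentiable (by simp) y).hasFDerivAt) h2.hasFDerivAt v w
  show fderiv ℝ (dD w f) x v = fderiv ℝ (dD v f) x w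
  rw [key, key]
  simpa using hsymm

lemma dD_iter_comm {f : Phase d → ℝ} (hf : ContDiff ℝ (⊤ : ℕ∞) f) (v w : Phase d) (n : ℕ) :
    dD v ((dD w)^[n] f) = (dD w)^[n] (dD v f) := by
  induction n generalizing f with
  | zero => rfl
  | succ n ih =>
    rw [Function.iterate_succ_apply', dD_comm (dD_iter_contDiff hf w n) v w, ih hf,
      Function.iterate_succ_apply']

lemma dD_add {g h : Phase d → ℝ} (hg : ContDiff ℝ (⊤ : ℕ∞) g) (hh : ContDiff ℝ (⊤ : ℕ∞) h) (v : Phase d) :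
    dD v (g + h) = dD v g + dD v h := by
  funext x
  show fderiv ℝ (fun y => g y + h y) x v = _
  rw [fderiv_fun_add (hg.differentiable (by simp) x) (hh.differentiable (by simp) x)]
  rfl

lemma dD_iter_add {g h : Phase d → ℝ} (hg : ContDiff ℝ (⊤ : ℕ∞) g) (hh : ContDiff ℝ (⊤ : ℕ∞) h)
    (v : Phase d) (n : ℕ) : (dD v)^[n] (g + h) = (dD v)^[n] g + (dD v)^[n] h := by
  induction n generalizing g h with
  | zero => rfl
  | succ n ih =>
    rw [Function.iterate_succ_apply, dD_add hg hh,
      ih (dD_contDiff hg v) (dD_contDiff hh v), Function.iterate_succ_apply,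
      Function.iterate_succ_apply]

lemma dD_smul {g : Phase d → ℝ} (hg : ContDiff ℝ (⊤ : ℕ∞) g) (c : ℝ) (v : Phase d) :
    dD v (c • g) = c • dD v g := by
  funext x
  show fderiv ℝ (fun y => c • g y) x v = c • fderiv ℝ g x v
  rw [fderiv_fun_const_smul (hg.differentiable (by simp) x) c]
  rfl

/-- coordinate map as a CLM -/
noncomputable def coordP (j : Fin d) : Phase d →L[ℝ] ℝ :=
  (ContinuousLinearMap.proj j).comp (ContinuousLinearMap.snd ℝ (Fin d → ℝ) (Fin d → ℝ))

lemma coordP_apply (j : Fin d) (x : Phase d) : coordP j x = x.2 j := rfl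

lemma Lop_contDiff {f : Phase d → ℝ} (hf : ContDiff ℝ (⊤ : ℕ∞) f) : ContDiff ℝ (⊤ : ℕ∞) (Lop f) := by
  apply ContDiff.sum fun j _ => ?_
  exact ((coordP j).contDiff).mul (dD_contDiff hf _)

lemma Lop_smul {f : Phase d → ℝ} (hf : ContDiff ℝ (⊤ : ℕ∞) f) (c : ℝ) :
    Lop (c • f) = c • Lop f := by
  funext x
  show ∑ j, x.2 j * pdq j (c • f) x = c • ∑ j, x.2 j * pdq j f x
  rw [Finset.smul_sum]
  refine Finset.sum_congr rfl fun j _ => ?_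
  rw [pdq_eq, dD_smul hf c]
  simp [smul_eq_mul]; ring

lemma dD_Lop {f : Phase d → ℝ} (hf : ContDiff ℝ (⊤ : ℕ∞) f) (v : Phase d) :
    dD v (Lop f) = (fun x => ∑ j, v.2 j * pdq j f x) + Lop (dD v f) := by
  funext x
  have hdiff : ∀ j : Fin d, DifferentiableAt ℝ (fun y : Phase d => y.2 j * pdq j f y) x :=
    fun j => (((coordP j).contDiff).mul (dD_contDiff hf _)).differentiable (by simp) x
  show fderiv ℝ (fun y => ∑ j, y.2 j * pdq j f y) x v = _
  rw [fderiv_fun_sum fun j _ => hdiff j]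
  rw [ContinuousLinearMap.sum_apply]
  have step : ∀ j : Fin d, fderiv ℝ (fun y : Phase d => y.2 j * pdq j f y) x v
      = v.2 j * pdq j f x + x.2 j * dD v (pdq j f) x := by
    intro j
    have hd' : DifferentiableAt ℝ (pdq j f) x :=
      (dD_contDiff hf (Pi.single j 1, 0)).differentiable (by simp) x
    have : (fun y : Phase d => y.2 j * pdq j f y) = fun y => coordP j y * pdq j f y := rfl
    rw [this, fderiv_fun_mul ((coordP j).differentiableAt) hd']
    simp only [ContinuousLinearMap.add_apply, ContinuousLinearMap.smul_apply,
      (coordP j).fderiv, coordP_apply, smul_eq_mul]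
    show x.2 j * fderiv ℝ (pdq j f) x v + pdq j f x * v.2 j = _
    have : fderiv ℝ (pdq j f) x v = dD v (pdq j f) x := rfl
    rw [this]; ring
  rw [Finset.sum_congr rfl fun j _ => step j, Finset.sum_add_distrib]
  congr 1
  show _ = ∑ j, x.2 j * pdq j (dD v f) x
  refine Finset.sum_congr rfl fun j _ => ?_
  rw [pdq_eq, dD_comm hf _ v]

lemma pdq_Lop {f : Phase d → ℝ} (hf : ContDiff ℝ (⊤ : ℕ∞) f) (m : Fin d) :
    pdq m (Lop f) = Lop (pdq m f) := by
  rw [pdq_eq, dD_Lop hf]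
  have : (fun x : Phase d => ∑ j, ((Pi.single m 1, (0 : Fin d → ℝ)) : Phase d).2 j * pdq j f x)
      = fun _ => 0 := by
    funext x; simp
  rw [this]
  funext x
  simp [Lop]

lemma pdp_Lop {f : Phase d → ℝ} (hf : ContDiff ℝ (⊤ : ℕ∞) f) (m : Fin d) :
    pdp m (Lop f) = pdq m f + Lop (pdp m f) := by
  rw [pdp_eq, dD_Lop hf]
  congr 1
  funext x
  rw [Finset.sum_eq_single m]
  · simp
  · intro b _ hb; simp [Pi.single_apply, hb]
  · simp

lemma pdq_contDiff {f : Phase d → ℝ} (hf : ContDiff ℝ (⊤ : ℕ∞) f) (i : Fin d) :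
    ContDiff ℝ (⊤ : ℕ∞) (pdq i f) := by rw [pdq_eq]; exact dD_contDiff hf _

lemma pdp_contDiff {f : Phase d → ℝ} (hf : ContDiff ℝ (⊤ : ℕ∞) f) (i : Fin d) :
    ContDiff ℝ (⊤ : ℕ∞) (pdp i f) := by rw [pdp_eq]; exact dD_contDiff hf _

lemma pdq_iter_contDiff {f : Phase d → ℝ} (hf : ContDiff ℝ (⊤ : ℕ∞) f) (i : Fin d) (n : ℕ) :
    ContDiff ℝ (⊤ : ℕ∞) ((pdq i)^[n] f) := by rw [pdq_eq]; exact dD_iter_contDiff hf _ n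

lemma pdp_iter_contDiff {f : Phase d → ℝ} (hf : ContDiff ℝ (⊤ : ℕ∞) f) (i : Fin d) (n : ℕ) :
    ContDiff ℝ (⊤ : ℕ∞) ((pdp i)^[n] f) := by rw [pdp_eq]; exact dD_iter_contDiff hf _ n

lemma pdp_iter_add {g h : Phase d → ℝ} (hg : ContDiff ℝ (⊤ : ℕ∞) g) (hh : ContDiff ℝ (⊤ : ℕ∞) h)
    (i : Fin d) (n : ℕ) : (pdp i)^[n] (g + h) = (pdp i)^[n] g + (pdp i)^[n] h := by
  rw [pdp_eq]; exact dD_iter_add hg hh _ n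

lemma pdq_pdp_iter_comm {f : Phase d → ℝ} (hf : ContDiff ℝ (⊤ : ℕ∞) f) (i : Fin d) (n : ℕ) :
    pdq i ((pdp i)^[n] f) = (pdp i)^[n] (pdq i f) := by
  rw [pdq_eq, pdp_eq]; exact dD_iter_comm hf _ _ n

lemma pdq_iter_Lop {f : Phase d → ℝ} (hf : ContDiff ℝ (⊤ : ℕ∞) f) (i : Fin d) (b : ℕ) :
    (pdq i)^[b] (Lop f) = Lop ((pdq i)^[b] f) := by
  induction b generalizing f with
  | zero => rfl
  | succ b ih =>
    rw [Function.iterate_succ_apply, pdq_Lop hf, ih (pdq_contDiff hf i),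
      Function.iterate_succ_apply]

lemma pdp_iter_Lop {f : Phase d → ℝ} (hf : ContDiff ℝ (⊤ : ℕ∞) f) (i : Fin d) (a : ℕ) :
    (pdp i)^[a + 1] (Lop f)
      = Lop ((pdp i)^[a + 1] f) + ((a : ℝ) + 1) • pdq i ((pdp i)^[a] f) := by
  induction a generalizing f with
  | zero =>
    simp only [zero_add, Function.iterate_one, Function.iterate_zero, id_eq, Nat.cast_zero]
    rw [pdp_Lop hf]
    module
  | succ a ih =>
    have hpf : ContDiff ℝ (⊤ : ℕ∞) (pdp i f) := pdp_contDiff hf i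
    have hqf : ContDiff ℝ (⊤ : ℕ∞) (pdq i f) := pdq_contDiff hf i
    rw [Function.iterate_succ_apply, pdp_Lop hf,
      pdp_iter_add hqf (Lop_contDiff hpf) i (a + 1), ih hpf]
    have h1 : (pdp i)^[a] (pdp i f) = (pdp i)^[a + 1] f :=
      (Function.iterate_succ_apply (pdp i) a f).symm
    have h2 : (pdp i)^[a + 1] (pdp i f) = (pdp i)^[a + 1 + 1] f :=
      (Function.iterate_succ_apply (pdp i) (a + 1) f).symm
    rw [h1, h2, pdq_pdp_iter_comm hf i (a + 1)]
    push_cast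
    module

/-- the key single-commutator computation -/
lemma adL_D {f : Phase d → ℝ} (hf : ContDiff ℝ (⊤ : ℕ∞) f) (i : Fin d) (a b : ℕ) :
    adL (fun g => (pdp i)^[a] ((pdq i)^[b] g)) f
      = (-(a : ℝ)) • (pdp i)^[a - 1] ((pdq i)^[b + 1] f) := by
  have hqb : ContDiff ℝ (⊤ : ℕ∞) ((pdq i)^[b] f) := pdq_iter_contDiff hf i b
  show Lop ((pdp i)^[a] ((pdq i)^[b] f)) - (pdp i)^[a] ((pdq i)^[b] (Lop f)) = _
  rw [pdq_iter_Lop hf]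
  cases a with
  | zero =>
    simp only [Function.iterate_zero, id_eq, Nat.cast_zero, neg_zero, zero_smul, sub_self]
  | succ a =>
    rw [pdp_iter_Lop hqb i a, pdq_pdp_iter_comm hqb i a]
    have h1 : (pdp i)^[a] (pdq i ((pdq i)^[b] f)) = (pdp i)^[a] ((pdq i)^[b + 1] f) := by
      rw [Function.iterate_succ_apply']
    rw [h1]
    simp only [Nat.add_sub_cancel]
    push_cast
    module

lemma main_formula (i : Fin d) (k ℓ : ℕ) : ∀ j, j ≤ k + 1 →
    ∀ f : Phase d → ℝ, ContDiff ℝ (⊤ : ℕ∞) f →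
    (adL)^[j] (fun g => (pdp i)^[k] ((pdq i)^[ℓ] g)) f
      = ((-1 : ℝ) ^ j * (Nat.descFactorial k j : ℝ)) •
          (pdp i)^[k - j] ((pdq i)^[ℓ + j] f) := by
  intro j
  induction j with
  | zero => intro _ f hf; simp
  | succ j ih =>
    intro hj f hf
    have hj' : j ≤ k := Nat.lt_succ_iff.mp hj
    rw [Function.iterate_succ_apply']
    show Lop ((adL)^[j] (fun g => (pdp i)^[k] ((pdq i)^[ℓ] g)) f)
        - (adL)^[j] (fun g => (pdp i)^[k] ((pdq i)^[ℓ] g)) (Lop f) = _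
    rw [ih (le_trans hj' (Nat.le_succ k)) f hf,
      ih (le_trans hj' (Nat.le_succ k)) (Lop f) (Lop_contDiff hf),
      Lop_smul (pdp_iter_contDiff (pdq_iter_contDiff hf i _) i _)]
    have key : Lop ((pdp i)^[k - j] ((pdq i)^[ℓ + j] f))
        - (pdp i)^[k - j] ((pdq i)^[ℓ + j] (Lop f))
        = (-(((k - j : ℕ)) : ℝ)) • (pdp i)^[k - j - 1] ((pdq i)^[ℓ + j + 1] f) :=
      adL_D hf i (k - j) (ℓ + j)
    rw [← smul_sub, key, smul_smul]
    have h2 : k - j - 1 = k - (j + 1) := by omega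
    have h3 : ℓ + j + 1 = ℓ + (j + 1) := rfl
    rw [h2, h3]
    congr 1
    rw [pow_succ, Nat.descFactorial_succ, Nat.cast_mul, Nat.cast_sub hj']
    ring


/-- For `j ≤ k`, `(ad_L)^j (∂^{k+ℓ}/∂pᵢᵏ∂qᵢˡ) = (-1)^j · k!/(k-j)! · ∂^{k+ℓ}/∂pᵢ^{k-j}∂qᵢ^{ℓ+j}`
(the factor `k!/(k-j)!` being the descending factorial), and for `j = k+1` it is `0`. -/
theorem adL_iterate_mixed_derivative {d : ℕ} (i : Fin d) (k ℓ j : ℕ) :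
    (j ≤ k → ∀ f : Phase d → ℝ, ContDiff ℝ (⊤ : ℕ∞) f →
      (adL)^[j] (fun g => (pdp i)^[k] ((pdq i)^[ℓ] g)) f
        = ((-1 : ℝ) ^ j * (Nat.descFactorial k j : ℝ)) •
            (pdp i)^[k - j] ((pdq i)^[ℓ + j] f)) ∧
    (j = k + 1 → ∀ f : Phase d → ℝ, ContDiff ℝ (⊤ : ℕ∞) f →
      (adL)^[j] (fun g => (pdp i)^[k] ((pdq i)^[ℓ] g)) f = 0) := by
  constructor
  · intro hjk f hf
    exact main_formula i k ℓ j (le_trans hjk (Nat.le_succ k)) f hf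
  · intro hje f hf
    subst hje
    rw [main_formula i k ℓ (k + 1) le_rfl f hf,
      Nat.descFactorial_eq_zero_iff_lt.mpr (Nat.lt_succ_self k)]
    simp
end

section
/- Let A be an element of an associative algebra and L another element. Suppose A₀ = 0 and for i ≥ 1 there exist elements Aᵢ with [L,Aᵢ] = (i/(i+1)!)·(ad A)^i([L,A]). Then for every k ≥ 1: k·A^{k-1}·[L,A] = [L, A^k] + Σ_{i=0}^{k-1} (k!/(k-1-i)!)·[L,Aᵢ]·A^{k-1-i}. -/
open Finset

lemma aux_pow_mul {R : Type*} [Ring R] [Algebra ℚ R] (A : R) :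
    ∀ (n : ℕ) (C : R), A ^ n * C
      = ∑ j ∈ range (n + 1),
          ((n.choose j : ℚ)) • ((fun x => A * x - x * A)^[j] C * A ^ (n - j)) := by
  intro n
  induction n with
  | zero => intro C; simp
  | succ n ihn =>
    intro C
    set F : R → R := fun x => A * x - x * A with hF
    have step3 : ∀ j, A * (F^[j] C * A ^ (n - j))
        = F^[j+1] C * A ^ (n - j) + F^[j] C * (A * A ^ (n - j)) := by
      intro j
      have h1 : A * F^[j] C = F^[j+1] C + F^[j] C * A := by
        rw [Function.iterate_succ_apply', hF]
        simp
      rw [← mul_assoc, h1, add_mul, mul_assoc]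
    have pow_eq : ∀ j ∈ range (n+1), A * A ^ (n - j) = A ^ (n + 1 - j) := by
      intro j hj
      rw [← pow_succ']
      congr 1
      have := Finset.mem_range.mp hj
      omega
    have lhs_eq : A ^ (n+1) * C
        = (∑ j ∈ range (n + 1), (n.choose j : ℚ) • (F^[j+1] C * A ^ (n - j)))
          + ∑ j ∈ range (n + 1), (n.choose j : ℚ) • (F^[j] C * A ^ (n + 1 - j)) := by
      rw [pow_succ', mul_assoc, ihn C, Finset.mul_sum, ← Finset.sum_add_distrib]
      refine Finset.sum_congr rfl fun j hj => ?_
      rw [mul_smul_comm, step3 j, pow_eq j hj, smul_add]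
    rw [lhs_eq]
    -- now massage RHS
    rw [Finset.sum_range_succ' (fun i => ((n+1).choose i : ℚ) • (F^[i] C * A ^ (n + 1 - i)))]
    have second : ∑ j ∈ range (n + 1), (n.choose j : ℚ) • (F^[j] C * A ^ (n + 1 - j))
        = (∑ i ∈ range n, (n.choose (i+1) : ℚ) • (F^[i+1] C * A ^ (n - i)))
          + (n.choose 0 : ℚ) • (F^[0] C * A ^ (n + 1)) := by
      rw [Finset.sum_range_succ' (fun j => (n.choose j : ℚ) • (F^[j] C * A ^ (n + 1 - j)))]
      simp only [Nat.succ_sub_succ, Nat.sub_zero]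
    have first : ∑ j ∈ range (n + 1), (n.choose (j+1) : ℚ) • (F^[j+1] C * A ^ (n - j))
        = ∑ j ∈ range n, (n.choose (j+1) : ℚ) • (F^[j+1] C * A ^ (n - j)) := by
      rw [Finset.sum_range_succ]
      simp
    rw [second]
    simp only [Nat.succ_sub_succ, Nat.choose_succ_succ, Nat.cast_add, add_smul]
    rw [Finset.sum_add_distrib, first]
    simp only [Nat.choose_zero_right, Nat.cast_one, one_smul, Function.iterate_zero_apply]
    abel

lemma coeff_eq (m j : ℕ) (hj : j < m) :
    (((m+1+1).factorial : ℚ)) / (((m-j).factorial : ℚ))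
        * (((j+1 : ℕ) : ℚ) / (((j+1+1).factorial : ℚ)))
      = ((m+1).factorial : ℚ) / (((m-(j+1)).factorial : ℚ))
          * (((j+1 : ℕ) : ℚ) / (((j+1+1).factorial : ℚ)))
        + ((m+1 : ℕ) : ℚ) * ((m.choose j : ℕ) : ℚ) := by
  obtain ⟨a, rfl⟩ : ∃ a, m = j + a + 1 := ⟨m - j - 1, by omega⟩
  have hsub1 : j + a + 1 - j = a + 1 := by omega
  have hsub2 : j + a + 1 - (j + 1) = a := by omega
  rw [hsub1, hsub2]
  have hch : (((j+a+1).choose j : ℕ) : ℚ)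
      = ((j+a+1).factorial : ℚ) / ((j.factorial : ℚ) * ((a+1).factorial : ℚ)) := by
    rw [Nat.cast_choose ℚ (by omega : j ≤ j + a + 1), hsub1]
  rw [hch]
  have f1 : ((j+a+1+1+1).factorial : ℚ)
      = ((j:ℚ)+a+3) * (((j:ℚ)+a+2) * ((j+a+1).factorial : ℚ)) := by
    rw [show j+a+1+1+1 = (j+a+2)+1 by omega, Nat.factorial_succ,
      show j+a+2 = (j+a+1)+1 by omega, Nat.factorial_succ]
    push_cast; ring
  have f2 : ((j+a+1+1).factorial : ℚ) = ((j:ℚ)+a+2) * ((j+a+1).factorial : ℚ) := by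
    rw [show j+a+1+1 = (j+a+1)+1 by omega, Nat.factorial_succ]
    push_cast; ring
  have f3 : ((a+1).factorial : ℚ) = ((a:ℚ)+1) * (a.factorial : ℚ) := by
    rw [Nat.factorial_succ]; push_cast; ring
  have f4 : ((j+1+1).factorial : ℚ) = ((j:ℚ)+2) * (((j:ℚ)+1) * (j.factorial : ℚ)) := by
    rw [show j+1+1 = (j+1)+1 by omega, Nat.factorial_succ, Nat.factorial_succ]
    push_cast; ring
  have n1 : ((j+a+1).factorial : ℚ) ≠ 0 := Nat.cast_ne_zero.mpr (Nat.factorial_ne_zero _)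
  have n2 : (a.factorial : ℚ) ≠ 0 := Nat.cast_ne_zero.mpr (Nat.factorial_ne_zero _)
  have n3 : (j.factorial : ℚ) ≠ 0 := Nat.cast_ne_zero.mpr (Nat.factorial_ne_zero _)
  rw [f1, f2, f3, f4]
  push_cast
  field_simp
  ring

lemma coeff_eq_top (m : ℕ) :
    (((m+1+1).factorial : ℚ)) / (((m-m).factorial : ℚ))
        * (((m+1 : ℕ) : ℚ) / (((m+1+1).factorial : ℚ)))
      = ((m+1 : ℕ) : ℚ) * ((m.choose m : ℕ) : ℚ) := by
  have n1 : (((m+1+1).factorial : ℕ) : ℚ) ≠ 0 := Nat.cast_ne_zero.mpr (Nat.factorial_ne_zero _)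
  rw [Nat.sub_self, Nat.choose_self]
  simp only [Nat.factorial_zero, Nat.cast_one, div_one, mul_one]
  field_simp

/-- Lemma 1 of the paper: in an associative `ℚ`-algebra, if `A₀ = 0` and
`[L, Aᵢ] = (i/(i+1)!) (ad A)^i [L, A]` for `i ≥ 1`, then for every `k ≥ 1`,
`k A^{k-1} [L,A] = [L, A^k] + ∑_{i=0}^{k-1} (k!/(k-1-i)!) [L, Aᵢ] A^{k-1-i}`. -/
theorem lemma_kA_pow_commutator {R : Type*} [Ring R] [Algebra ℚ R]
    (L A : R) (As : ℕ → R) (h0 : As 0 = 0)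
    (h : ∀ i : ℕ, 1 ≤ i →
      L * As i - As i * L
        = ((i : ℚ) / ((i + 1).factorial : ℚ)) •
            ((fun x => A * x - x * A)^[i] (L * A - A * L)))
    (k : ℕ) (hk : 1 ≤ k) :
    (k : ℚ) • (A ^ (k - 1) * (L * A - A * L))
      = (L * A ^ k - A ^ k * L)
        + ∑ i ∈ range k,
            ((k.factorial : ℚ) / (((k - 1 - i).factorial : ℚ))) •
              ((L * As i - As i * L) * A ^ (k - 1 - i)) := by
  induction k, hk using Nat.le_induction with
  | base => simp [h0]
  | succ n hn ih =>
    obtain ⟨m, rfl⟩ : ∃ m, n = m + 1 := ⟨n - 1, by omega⟩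
    clear hn
    set F : R → R := fun x => A * x - x * A with hF
    set B : R := L * A - A * L with hB
    simp only [Nat.add_sub_cancel] at ih ⊢
    have e1 : L * A ^ (m+1+1) - A ^ (m+1+1) * L
        = (L * A ^ (m+1) - A ^ (m+1) * L) * A + A ^ (m+1) * B := by
      rw [pow_succ, hB]
      noncomm_ring
    have e2 : ((m+1 : ℕ) : ℚ) • (A ^ m * B * A)
        = (L * A ^ (m+1) - A ^ (m+1) * L) * A
          + ∑ i ∈ range (m+1),
              (((m+1).factorial : ℚ) / (((m - i).factorial : ℚ))) •
                ((L * As i - As i * L) * A ^ (m + 1 - i)) := by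
      have h' := congrArg (fun x => x * A) ih
      simp only [smul_mul_assoc, add_mul, Finset.sum_mul] at h'
      rw [h']
      congr 1
      refine Finset.sum_congr rfl fun i hi => ?_
      rw [mul_assoc, ← pow_succ,
        show m - i + 1 = m + 1 - i by have := Finset.mem_range.mp hi; omega]
    have e4 : ∑ j ∈ range (m+1), (((m+1 : ℕ) : ℚ) * (m.choose j : ℚ)) • (F^[j+1] B * A ^ (m - j))
        = ((m+1 : ℕ) : ℚ) • (A ^ (m+1) * B) - ((m+1 : ℕ) : ℚ) • (A ^ m * B * A) := by
      have hFB : A ^ m * F B = A ^ (m+1) * B - A ^ m * B * A := by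
        have : F B = A * B - B * A := rfl
        rw [this, mul_sub, ← mul_assoc, ← mul_assoc, ← pow_succ]
      rw [← smul_sub, ← hFB, aux_pow_mul A m (F B), Finset.smul_sum]
      refine Finset.sum_congr rfl fun j hj => ?_
      rw [smul_smul, ← Function.iterate_succ_apply]
    have e3 : (∑ i ∈ range (m+1+1),
          (((m+1+1).factorial : ℚ) / (((m+1-i).factorial : ℚ))) •
            ((L * As i - As i * L) * A ^ (m+1-i)))
        = (∑ i ∈ range (m+1),
            (((m+1).factorial : ℚ) / (((m - i).factorial : ℚ))) •
              ((L * As i - As i * L) * A ^ (m + 1 - i)))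
          + ∑ j ∈ range (m+1),
              (((m+1 : ℕ) : ℚ) * (m.choose j : ℚ)) • (F^[j+1] B * A ^ (m - j)) := by
      have hL : (∑ i ∈ range (m+1+1),
            (((m+1+1).factorial : ℚ) / (((m+1-i).factorial : ℚ))) •
              ((L * As i - As i * L) * A ^ (m+1-i)))
          = ∑ j ∈ range (m+1),
              ((((m+1+1).factorial : ℚ) / (((m-j).factorial : ℚ)))
                  * (((j+1 : ℕ) : ℚ) / (((j+1+1).factorial : ℚ)))) •
                (F^[j+1] B * A ^ (m-j)) := by
        rw [Finset.sum_range_succ']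
        simp only [h0, mul_zero, zero_mul, sub_zero, zero_sub, neg_zero, smul_zero, add_zero,
          Nat.add_sub_add_right]
        refine Finset.sum_congr rfl fun j hj => ?_
        rw [h (j+1) (by omega), smul_mul_assoc, smul_smul]
      have hQ : (∑ i ∈ range (m+1),
            (((m+1).factorial : ℚ) / (((m - i).factorial : ℚ))) •
              ((L * As i - As i * L) * A ^ (m + 1 - i)))
          = ∑ j ∈ range m,
              ((((m+1).factorial : ℚ) / (((m-(j+1)).factorial : ℚ)))
                  * (((j+1 : ℕ) : ℚ) / (((j+1+1).factorial : ℚ)))) •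
                (F^[j+1] B * A ^ (m-j)) := by
        rw [Finset.sum_range_succ']
        simp only [h0, mul_zero, zero_mul, sub_zero, zero_sub, neg_zero, smul_zero, add_zero,
          Nat.add_sub_add_right]
        refine Finset.sum_congr rfl fun j hj => ?_
        rw [h (j+1) (by omega), smul_mul_assoc, smul_smul]
      rw [hL, hQ, Finset.sum_range_succ, Finset.sum_range_succ
        (fun j => (((m+1 : ℕ) : ℚ) * (m.choose j : ℚ)) • (F^[j+1] B * A ^ (m - j)))]
      rw [coeff_eq_top m]
      have hterm : ∀ j ∈ range m,
          ((((m+1+1).factorial : ℚ) / (((m-j).factorial : ℚ)))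
              * (((j+1 : ℕ) : ℚ) / (((j+1+1).factorial : ℚ)))) • (F^[j+1] B * A ^ (m-j))
            = ((((m+1).factorial : ℚ) / (((m-(j+1)).factorial : ℚ)))
                  * (((j+1 : ℕ) : ℚ) / (((j+1+1).factorial : ℚ)))) • (F^[j+1] B * A ^ (m-j))
              + (((m+1 : ℕ) : ℚ) * (m.choose j : ℚ)) • (F^[j+1] B * A ^ (m-j)) := by
        intro j hj
        rw [← add_smul, coeff_eq m j (Finset.mem_range.mp hj)]
      rw [Finset.sum_congr rfl hterm, Finset.sum_add_distrib]
      abel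
    have e4' : ((m+1 : ℕ) : ℚ) • (A ^ (m+1) * B)
        = (∑ j ∈ range (m+1), (((m+1 : ℕ) : ℚ) * (m.choose j : ℚ)) • (F^[j+1] B * A ^ (m - j)))
          + ((m+1 : ℕ) : ℚ) • (A ^ m * B * A) := by
      rw [e4, sub_add_cancel]
    rw [show ((m+1+1 : ℕ) : ℚ) = ((m+1 : ℕ) : ℚ) + 1 by push_cast; ring, add_smul, one_smul,
      e1, e3, e4', e2]
    abel
end

section
/- The Smorodinsky–Winternitz Hamiltonian H = ½(p₁² + p₂²) + β₁(q₁² + q₂²) + β₂/q₁² + β₃/q₂² Poisson-commutes with the function X = m₁₂² + 2β₂q₂²/q₁² + 2β₃q₁²/q₂², where m₁₂ = q₁p₂ − q₂p₁: that is, {X, H} = 0, where { , } is the canonical Poisson bracket on ℝ⁴ (away from q₁ = 0 and q₂ = 0). -/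
/-- The Smorodinsky–Winternitz Hamiltonian
`H = ½(p₁² + p₂²) + β₁(q₁² + q₂²) + β₂/q₁² + β₃/q₂²`. -/
noncomputable def Hsw (β₁ β₂ β₃ q₁ q₂ p₁ p₂ : ℝ) : ℝ :=
  (p₁ ^ 2 + p₂ ^ 2) / 2 + β₁ * (q₁ ^ 2 + q₂ ^ 2) + β₂ / q₁ ^ 2 + β₃ / q₂ ^ 2

/-- The classical second-order integral `X = m₁₂² + 2β₂q₂²/q₁² + 2β₃q₁²/q₂²`. -/
noncomputable def Xsw (β₂ β₃ q₁ q₂ p₁ p₂ : ℝ) : ℝ :=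
  (q₁ * p₂ - q₂ * p₁) ^ 2 + 2 * β₂ * q₂ ^ 2 / q₁ ^ 2 + 2 * β₃ * q₁ ^ 2 / q₂ ^ 2

/-!
The angular momentum `m₁₂` commutes with the isotropic part `½|p|² + β₁|q|²` of `H`, so
`{m₁₂², H} = 2 m₁₂ {m₁₂, β₂/q₁² + β₃/q₂²}`; this is cancelled exactly by the bracket of the
correction terms `2β₂q₂²/q₁² + 2β₃q₁²/q₂²` with the kinetic energy, the only part of `H` they fail
to commute with. The swap `(q₁, p₁, β₂) ↔ (q₂, p₂, β₃)` preserves both `X` and `H`, so only the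
partial derivatives in `q₁` and `p₁` need to be computed.
-/

theorem hasDerivAt_const_div_sq {𝕜 : Type*} [NontriviallyNormedField 𝕜] (c : 𝕜) {x : 𝕜}
    (hx : x ≠ 0) : HasDerivAt (fun t => c / t ^ 2) (-2 * c / x ^ 3) x := by
  refine ((hasDerivAt_const x c).div (hasDerivAt_pow 2 x) (pow_ne_zero 2 hx)).congr_deriv ?_
  field_simp
  ring

theorem Xsw_swap (β₂ β₃ q₁ q₂ p₁ p₂ : ℝ) :
    Xsw β₂ β₃ q₁ q₂ p₁ p₂ = Xsw β₃ β₂ q₂ q₁ p₂ p₁ := by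
  unfold Xsw
  ring

theorem Hsw_swap (β₁ β₂ β₃ q₁ q₂ p₁ p₂ : ℝ) :
    Hsw β₁ β₂ β₃ q₁ q₂ p₁ p₂ = Hsw β₁ β₃ β₂ q₂ q₁ p₂ p₁ := by
  unfold Hsw
  ring

theorem hasDerivAt_Xsw_q₁ (β₂ β₃ q₁ q₂ p₁ p₂ : ℝ) (h₁ : q₁ ≠ 0) :
    HasDerivAt (fun t => Xsw β₂ β₃ t q₂ p₁ p₂)
      (2 * (q₁ * p₂ - q₂ * p₁) * p₂ - 4 * β₂ * q₂ ^ 2 / q₁ ^ 3 + 4 * β₃ * q₁ / q₂ ^ 2) q₁ := by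
  have := (((((hasDerivAt_id q₁).mul_const p₂).sub_const (q₂ * p₁)).pow 2).add
    (hasDerivAt_const_div_sq (2 * β₂ * q₂ ^ 2) h₁)).add
    (((hasDerivAt_pow 2 q₁).const_mul (2 * β₃)).div_const (q₂ ^ 2))
  refine this.congr_deriv ?_
  simp only [id_eq, Nat.cast_ofNat, Nat.add_one_sub_one, pow_one, one_mul]
  ring

theorem hasDerivAt_Xsw_p₁ (β₂ β₃ q₁ q₂ p₁ p₂ : ℝ) :
    HasDerivAt (fun t => Xsw β₂ β₃ q₁ q₂ t p₂) (-2 * (q₁ * p₂ - q₂ * p₁) * q₂) p₁ := by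
  have := (((((hasDerivAt_id p₁).const_mul q₂).const_sub (q₁ * p₂)).pow 2).add_const
    (2 * β₂ * q₂ ^ 2 / q₁ ^ 2)).add_const (2 * β₃ * q₁ ^ 2 / q₂ ^ 2)
  refine this.congr_deriv ?_
  simp

theorem hasDerivAt_Hsw_q₁ (β₁ β₂ β₃ q₁ q₂ p₁ p₂ : ℝ) (h₁ : q₁ ≠ 0) :
    HasDerivAt (fun t => Hsw β₁ β₂ β₃ t q₂ p₁ p₂) (2 * β₁ * q₁ - 2 * β₂ / q₁ ^ 3) q₁ := by
  have := (((((hasDerivAt_pow 2 q₁).add_const (q₂ ^ 2)).const_mul β₁).const_add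
    ((p₁ ^ 2 + p₂ ^ 2) / 2)).add (hasDerivAt_const_div_sq β₂ h₁)).add_const (β₃ / q₂ ^ 2)
  refine this.congr_deriv ?_
  simp only [Nat.cast_ofNat, Nat.add_one_sub_one, pow_one]
  ring

theorem hasDerivAt_Hsw_p₁ (β₁ β₂ β₃ q₁ q₂ p₁ p₂ : ℝ) :
    HasDerivAt (fun t => Hsw β₁ β₂ β₃ q₁ q₂ t p₂) p₁ p₁ := by
  have := (((((hasDerivAt_pow 2 p₁).add_const (p₂ ^ 2)).div_const 2).add_const
    (β₁ * (q₁ ^ 2 + q₂ ^ 2))).add_const (β₂ / q₁ ^ 2)).add_const (β₃ / q₂ ^ 2)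
  refine this.congr_deriv ?_
  simp

theorem hasDerivAt_Xsw_q₂ (β₂ β₃ q₁ q₂ p₁ p₂ : ℝ) (h₂ : q₂ ≠ 0) :
    HasDerivAt (fun t => Xsw β₂ β₃ q₁ t p₁ p₂)
      (2 * (q₂ * p₁ - q₁ * p₂) * p₁ - 4 * β₃ * q₁ ^ 2 / q₂ ^ 3 + 4 * β₂ * q₂ / q₁ ^ 2) q₂ := by
  rw [funext fun t => Xsw_swap β₂ β₃ q₁ t p₁ p₂]
  exact hasDerivAt_Xsw_q₁ β₃ β₂ q₂ q₁ p₂ p₁ h₂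

theorem hasDerivAt_Xsw_p₂ (β₂ β₃ q₁ q₂ p₁ p₂ : ℝ) :
    HasDerivAt (fun t => Xsw β₂ β₃ q₁ q₂ p₁ t) (-2 * (q₂ * p₁ - q₁ * p₂) * q₁) p₂ := by
  rw [funext fun t => Xsw_swap β₂ β₃ q₁ q₂ p₁ t]
  exact hasDerivAt_Xsw_p₁ β₃ β₂ q₂ q₁ p₂ p₁

theorem hasDerivAt_Hsw_q₂ (β₁ β₂ β₃ q₁ q₂ p₁ p₂ : ℝ) (h₂ : q₂ ≠ 0) :
    HasDerivAt (fun t => Hsw β₁ β₂ β₃ q₁ t p₁ p₂) (2 * β₁ * q₂ - 2 * β₃ / q₂ ^ 3) q₂ := by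
  rw [funext fun t => Hsw_swap β₁ β₂ β₃ q₁ t p₁ p₂]
  exact hasDerivAt_Hsw_q₁ β₁ β₃ β₂ q₂ q₁ p₂ p₁ h₂

theorem hasDerivAt_Hsw_p₂ (β₁ β₂ β₃ q₁ q₂ p₁ p₂ : ℝ) :
    HasDerivAt (fun t => Hsw β₁ β₂ β₃ q₁ q₂ p₁ t) p₂ p₂ := by
  rw [funext fun t => Hsw_swap β₁ β₂ β₃ q₁ q₂ p₁ t]
  exact hasDerivAt_Hsw_p₁ β₁ β₃ β₂ q₂ q₁ p₂ p₁

/-- The Poisson bracket `{X, H}` vanishes away from `q₁ = 0`, `q₂ = 0`. -/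
theorem poisson_bracket_Xsw_Hsw_eq_zero (β₁ β₂ β₃ q₁ q₂ p₁ p₂ : ℝ)
    (h1 : q₁ ≠ 0) (h2 : q₂ ≠ 0) :
    deriv (fun t => Xsw β₂ β₃ t q₂ p₁ p₂) q₁ * deriv (fun t => Hsw β₁ β₂ β₃ q₁ q₂ t p₂) p₁
    + deriv (fun t => Xsw β₂ β₃ q₁ t p₁ p₂) q₂ * deriv (fun t => Hsw β₁ β₂ β₃ q₁ q₂ p₁ t) p₂
    - deriv (fun t => Xsw β₂ β₃ q₁ q₂ t p₂) p₁ * deriv (fun t => Hsw β₁ β₂ β₃ t q₂ p₁ p₂) q₁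
    - deriv (fun t => Xsw β₂ β₃ q₁ q₂ p₁ t) p₂ * deriv (fun t => Hsw β₁ β₂ β₃ q₁ t p₁ p₂) q₂
    = 0 := by
  rw [(hasDerivAt_Xsw_q₁ β₂ β₃ q₁ q₂ p₁ p₂ h1).deriv, (hasDerivAt_Xsw_q₂ β₂ β₃ q₁ q₂ p₁ p₂ h2).deriv,
    (hasDerivAt_Xsw_p₁ β₂ β₃ q₁ q₂ p₁ p₂).deriv, (hasDerivAt_Xsw_p₂ β₂ β₃ q₁ q₂ p₁ p₂).deriv,
    (hasDerivAt_Hsw_q₁ β₁ β₂ β₃ q₁ q₂ p₁ p₂ h1).deriv, (hasDerivAt_Hsw_q₂ β₁ β₂ β₃ q₁ q₂ p₁ p₂ h2).deriv,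
    (hasDerivAt_Hsw_p₁ β₁ β₂ β₃ q₁ q₂ p₁ p₂).deriv, (hasDerivAt_Hsw_p₂ β₁ β₂ β₃ q₁ q₂ p₁ p₂).deriv]
  field_simp
  ring
end
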